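/- Every countable random bipartite graph is homogeneous. -/
import Mathlib


structure BipGraph (V : Type*) where
  L : Set V
  R : Set V
  Lne : L.Nonempty
  Rne : R.Nonempty
  disj : Disjoint L R
  E : V → V → Prop
  symm : ∀ x y, E x y → E y x
  bip : ∀ x y, E x y → (x ∈ L ∧ y ∈ R) ∨ (x ∈ R ∧ y ∈ L)

namespace BipGraph

variable {V W : Type*}

def verts (Γ : BipGraph V) : Set V := Γ.L ∪ Γ.R

def nbr (Γ : BipGraph V) (v : V) : Set V := {u | Γ.E v u}

def IsComplete (Γ : BipGraph V) : Prop := ∀ x ∈ Γ.L, ∀ y ∈ Γ.R, Γ.E x y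

def IsEmptyG (Γ : BipGraph V) : Prop := ∀ x y, ¬ Γ.E x y

def IsPartialIso (Γ : BipGraph V) (Γ' : BipGraph W) (s : Set V) (f : V → W) : Prop :=
  s ⊆ Γ.verts ∧ Set.InjOn f s ∧
  (∀ x ∈ s, x ∈ Γ.L → f x ∈ Γ'.L) ∧
  (∀ x ∈ s, x ∈ Γ.R → f x ∈ Γ'.R) ∧
  (∀ x ∈ s, ∀ y ∈ s, (Γ.E x y ↔ Γ'.E (f x) (f y)))

def IsIso (Γ : BipGraph V) (Γ' : BipGraph W) (f : V → W) : Prop :=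
  Set.BijOn f Γ.verts Γ'.verts ∧
  Set.MapsTo f Γ.L Γ'.L ∧ Set.MapsTo f Γ.R Γ'.R ∧
  (∀ x ∈ Γ.verts, ∀ y ∈ Γ.verts, (Γ.E x y ↔ Γ'.E (f x) (f y)))

def IsAuto (Γ : BipGraph V) (f : V → V) : Prop := Γ.IsIso Γ f

def Homog (Γ : BipGraph V) : Prop :=
  ∀ (s : Set V) (f : V → V), s.Finite → Γ.IsPartialIso Γ s f →
    ∃ g : V → V, Γ.IsAuto g ∧ Set.EqOn f g s

def IsRandom (Γ : BipGraph V) : Prop :=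
  Γ.L.Infinite ∧ Γ.R.Infinite ∧
  (∀ X Y : Set V, X ⊆ Γ.L → Y ⊆ Γ.L → X.Finite → Y.Finite → Disjoint X Y →
    {u ∈ Γ.R | (∀ x ∈ X, Γ.E x u) ∧ (∀ y ∈ Y, ¬ Γ.E y u)}.Infinite) ∧
  (∀ X Y : Set V, X ⊆ Γ.R → Y ⊆ Γ.R → X.Finite → Y.Finite → Disjoint X Y →
    {u ∈ Γ.L | (∀ x ∈ X, Γ.E x u) ∧ (∀ y ∈ Y, ¬ Γ.E y u)}.Infinite)

def Ctble (Γ : BipGraph V) : Prop := Γ.L.Countable ∧ Γ.R.Countable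

def IsSaS (Γ : BipGraph V) (κ μ : Cardinal) : Prop :=
  Γ.Homog ∧ ¬ Γ.IsComplete ∧ ¬ Γ.IsEmptyG ∧
  Cardinal.mk Γ.L = κ ∧ Cardinal.mk Γ.R = μ ∧ κ < μ

end BipGraph


namespace BipGraph

variable {V : Type*} (Γ : BipGraph V)

lemma E_comm {x y : V} : Γ.E x y ↔ Γ.E y x := ⟨Γ.symm x y, Γ.symm y x⟩

lemma not_E_LL {x y : V} (hx : x ∈ Γ.L) (hy : y ∈ Γ.L) : ¬ Γ.E x y := fun h => by
  rcases Γ.bip x y h with ⟨_, h2⟩ | ⟨h1, _⟩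
  · exact Set.disjoint_left.mp Γ.disj hy h2
  · exact Set.disjoint_left.mp Γ.disj hx h1

lemma not_E_RR {x y : V} (hx : x ∈ Γ.R) (hy : y ∈ Γ.R) : ¬ Γ.E x y := fun h => by
  rcases Γ.bip x y h with ⟨h1, _⟩ | ⟨_, h2⟩
  · exact Set.disjoint_left.mp Γ.disj h1 hx
  · exact Set.disjoint_left.mp Γ.disj h2 hy

/-- swap left and right -/
def flip : BipGraph V where
  L := Γ.R
  R := Γ.L
  Lne := Γ.Rne
  Rne := Γ.Lne
  disj := Γ.disj.symm
  E := Γ.E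
  symm := Γ.symm
  bip := fun x y h => (Γ.bip x y h).symm

lemma flip_verts : Γ.flip.verts = Γ.verts := Set.union_comm _ _

lemma flip_random (hr : Γ.IsRandom) : Γ.flip.IsRandom :=
  ⟨hr.2.1, hr.1, hr.2.2.2, hr.2.2.1⟩

lemma flip_pi {s : Set V} {f : V → V} (h : Γ.IsPartialIso Γ s f) :
    Γ.flip.IsPartialIso Γ.flip s f := by
  obtain ⟨h1, h2, h3, h4, h5⟩ := h
  exact ⟨by rw [flip_verts]; exact h1, h2, h4, h3, h5⟩

lemma forth_left (hr : Γ.IsRandom) {s : Set V} {f : V → V} (hs : s.Finite)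
    (h : Γ.IsPartialIso Γ s f) {v : V} (hv : v ∈ Γ.L) :
    ∃ s' f', s'.Finite ∧ s ⊆ s' ∧ v ∈ s' ∧ Set.EqOn f f' s ∧ Γ.IsPartialIso Γ s' f' := by
  classical
  by_cases hvs : v ∈ s
  · exact ⟨s, f, hs, subset_rfl, hvs, fun _ _ => rfl, h⟩
  obtain ⟨hsub, hinj, hL, hR, hE⟩ := h
  have memR : ∀ x ∈ s, Γ.E x v → x ∈ Γ.R := by
    intro x _ hxv
    rcases Γ.bip x v hxv with ⟨_, h2⟩ | ⟨h1, _⟩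
    · exact absurd hv (Set.disjoint_right.mp Γ.disj h2)
    · exact h1
  set X := f '' {x ∈ s | Γ.E x v} with hXdef
  set Y := f '' {x ∈ s | x ∈ Γ.R ∧ ¬ Γ.E x v} with hYdef
  have hXR : X ⊆ Γ.R := by
    rintro _ ⟨x, ⟨hxs, hxv⟩, rfl⟩; exact hR x hxs (memR x hxs hxv)
  have hYR : Y ⊆ Γ.R := by
    rintro _ ⟨x, ⟨hxs, hxR, _⟩, rfl⟩; exact hR x hxs hxR
  have hXfin : X.Finite := (hs.subset (Set.sep_subset _ _)).image f
  have hYfin : Y.Finite := (hs.subset (Set.sep_subset _ _)).image f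
  have hdisj : Disjoint X Y := by
    rw [Set.disjoint_left]
    rintro _ ⟨a, ⟨has, hav⟩, rfl⟩ ⟨b, ⟨hbs, _, hbnv⟩, hfb⟩
    exact hbnv (hinj hbs has hfb ▸ hav)
  have hT := hr.2.2.2 X Y hXR hYR hXfin hYfin hdisj
  obtain ⟨w, ⟨hwL, hwX, hwY⟩, hwnot⟩ := (hT.diff (hs.image f)).nonempty
  refine ⟨insert v s, Function.update f v w, hs.insert v, Set.subset_insert _ _,
    Set.mem_insert _ _, ?_, ?_⟩
  · intro x hx
    exact (Function.update_of_ne (fun hxv : _ = v => hvs (hxv ▸ hx)) w f).symm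
  have hupd : ∀ x ∈ s, Function.update f v w x = f x := fun x hx =>
    Function.update_of_ne (fun hxv : _ = v => hvs (hxv ▸ hx)) w f
  have hupdv : Function.update f v w v = w := Function.update_self v w f
  have key : ∀ y ∈ s, (Γ.E v y ↔ Γ.E w (f y)) := by
    intro y hy
    rcases hsub hy with hyL | hyR
    · constructor
      · intro hvy; exact absurd hvy (Γ.not_E_LL hv hyL)
      · intro hwy; exact absurd hwy (Γ.not_E_LL hwL (hL y hy hyL))
    · by_cases hyv : Γ.E y v
      · have : f y ∈ X := ⟨y, ⟨hy, hyv⟩, rfl⟩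
        exact iff_of_true (Γ.symm y v hyv) (Γ.symm _ _ (hwX _ this))
      · have : f y ∈ Y := ⟨y, ⟨hy, hyR, hyv⟩, rfl⟩
        exact iff_of_false (fun h' => hyv (Γ.symm v y h')) (fun h' => hwY _ this (Γ.symm w _ h'))
  refine ⟨?_, ?_, ?_, ?_, ?_⟩
  · exact Set.insert_subset (Or.inl hv) hsub
  · rw [Set.injOn_insert hvs]
    refine ⟨hinj.congr (fun x hx => (hupd x hx).symm), ?_⟩
    rw [hupdv]
    intro hmem
    apply hwnot
    rwa [Set.EqOn.image_eq (fun x hx => hupd x hx)] at hmem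
  · rintro x (rfl | hx) hxL
    · rwa [hupdv]
    · rw [hupd x hx]; exact hL x hx hxL
  · rintro x (rfl | hx) hxR
    · exact absurd hv (Set.disjoint_right.mp Γ.disj hxR)
    · rw [hupd x hx]; exact hR x hx hxR
  · rintro x (rfl | hx) y (rfl | hy)
    · rw [hupdv]
      exact iff_of_false (Γ.not_E_LL hv hv) (Γ.not_E_LL hwL hwL)
    · rw [hupdv, hupd y hy]; exact key y hy
    · rw [hupdv, hupd x hx]
      rw [Γ.E_comm, key x hx, Γ.E_comm]
    · rw [hupd x hx, hupd y hy]; exact hE x hx y hy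

lemma forth (hr : Γ.IsRandom) {s : Set V} {f : V → V} (hs : s.Finite)
    (h : Γ.IsPartialIso Γ s f) {v : V} (hv : v ∈ Γ.verts) :
    ∃ s' f', s'.Finite ∧ s ⊆ s' ∧ v ∈ s' ∧ Set.EqOn f f' s ∧ Γ.IsPartialIso Γ s' f' := by
  rcases hv with hv | hv
  · exact Γ.forth_left hr hs h hv
  · obtain ⟨s', f', h1, h2, h3, h4, h5⟩ :=
      Γ.flip.forth_left (Γ.flip_random hr) hs (Γ.flip_pi h) (v := v) hv
    exact ⟨s', f', h1, h2, h3, h4, Γ.flip.flip_pi h5⟩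

lemma invert {s : Set V} {f : V → V} (h : Γ.IsPartialIso Γ s f) :
    ∃ g : V → V, Γ.IsPartialIso Γ (f '' s) g ∧ (∀ x ∈ s, g (f x) = x) := by
  have : Nonempty V := ⟨Γ.Lne.choose⟩
  obtain ⟨hsub, hinj, hL, hR, hE⟩ := h
  set g := Function.invFunOn f s with hg
  have hgf : ∀ x ∈ s, g (f x) = x := fun x hx => hinj.leftInvOn_invFunOn hx
  have hmemL : ∀ x ∈ s, f x ∈ Γ.L → x ∈ Γ.L := by
    intro x hx hfx
    rcases hsub hx with h1 | h1
    · exact h1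
    · exact absurd (hR x hx h1) (Set.disjoint_left.mp Γ.disj hfx)
  have hmemR : ∀ x ∈ s, f x ∈ Γ.R → x ∈ Γ.R := by
    intro x hx hfx
    rcases hsub hx with h1 | h1
    · exact absurd (hL x hx h1) (Set.disjoint_right.mp Γ.disj hfx)
    · exact h1
  refine ⟨g, ⟨?_, ?_, ?_, ?_, ?_⟩, hgf⟩
  · rintro _ ⟨x, hx, rfl⟩
    rcases hsub hx with h1 | h1
    · exact Or.inl (hL x hx h1)
    · exact Or.inr (hR x hx h1)
  · rintro _ ⟨a, ha, rfl⟩ _ ⟨b, hb, rfl⟩ hab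
    rw [hgf a ha, hgf b hb] at hab
    rw [hab]
  · rintro _ ⟨x, hx, rfl⟩ hfx
    rw [hgf x hx]; exact hmemL x hx hfx
  · rintro _ ⟨x, hx, rfl⟩ hfx
    rw [hgf x hx]; exact hmemR x hx hfx
  · rintro _ ⟨a, ha, rfl⟩ _ ⟨b, hb, rfl⟩
    rw [hgf a ha, hgf b hb]
    exact (hE a ha b hb).symm

lemma back (hr : Γ.IsRandom) {s : Set V} {f : V → V} (hs : s.Finite)
    (h : Γ.IsPartialIso Γ s f) {w : V} (hw : w ∈ Γ.verts) :
    ∃ s' f', s'.Finite ∧ s ⊆ s' ∧ w ∈ f' '' s' ∧ Set.EqOn f f' s ∧ Γ.IsPartialIso Γ s' f' := by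
  obtain ⟨g, hgpi, hgf⟩ := Γ.invert h
  obtain ⟨t', g', ht'fin, htt', hwt', heq, hg'pi⟩ := Γ.forth hr (hs.image f) hgpi hw
  obtain ⟨f', hf'pi, hf'g'⟩ := Γ.invert hg'pi
  refine ⟨g' '' t', f', ht'fin.image g', ?_, ?_, ?_, hf'pi⟩
  · intro x hx
    have hfx : f x ∈ t' := htt' ⟨x, hx, rfl⟩
    refine ⟨f x, hfx, ?_⟩
    rw [← heq ⟨x, hx, rfl⟩, hgf x hx]
  · exact ⟨g' w, ⟨w, hwt', rfl⟩, hf'g' w hwt'⟩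
  · intro x hx
    have hfx : f x ∈ t' := htt' ⟨x, hx, rfl⟩
    have hx' : g' (f x) = x := by rw [← heq ⟨x, hx, rfl⟩, hgf x hx]
    calc f x = f' (g' (f x)) := (hf'g' (f x) hfx).symm
    _ = f' x := by rw [hx']

lemma extend (hr : Γ.IsRandom) {s : Set V} {f : V → V} (hs : s.Finite)
    (h : Γ.IsPartialIso Γ s f) {v w : V} (hv : v ∈ Γ.verts) (hw : w ∈ Γ.verts) :
    ∃ s' f', s'.Finite ∧ s ⊆ s' ∧ v ∈ s' ∧ w ∈ f' '' s' ∧ Set.EqOn f f' s ∧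
      Γ.IsPartialIso Γ s' f' := by
  obtain ⟨s1, f1, h1fin, hss1, hvs1, heq1, h1pi⟩ := Γ.forth hr hs h hv
  obtain ⟨s2, f2, h2fin, hs12, hws2, heq2, h2pi⟩ := Γ.back hr h1fin h1pi hw
  exact ⟨s2, f2, h2fin, hss1.trans hs12, hs12 hvs1, hws2,
    fun x hx => (heq1 hx).trans (heq2 (hss1 hx)), h2pi⟩

end BipGraph

theorem countable_random_bipartite_homog {V : Type*} (Γ : BipGraph V)
    (hc : Γ.Ctble) (hr : Γ.IsRandom) : Γ.Homog := by
  classical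
  intro s f hfin hpi
  have hvne : Γ.verts.Nonempty := ⟨Γ.Lne.choose, Or.inl Γ.Lne.choose_spec⟩
  have hvct : Γ.verts.Countable := hc.1.union hc.2
  obtain ⟨e, he⟩ := hvct.exists_eq_range hvne
  have hev : ∀ n, e n ∈ Γ.verts := fun n => he ▸ Set.mem_range_self n
  have ex : ∀ p : {p : Set V × (V → V) // p.1.Finite ∧ Γ.IsPartialIso Γ p.1 p.2}, ∀ n : ℕ,
      ∃ q : Set V × (V → V), (q.1.Finite ∧ Γ.IsPartialIso Γ q.1 q.2) ∧
        p.1.1 ⊆ q.1 ∧ e n ∈ q.1 ∧ e n ∈ q.2 '' q.1 ∧ Set.EqOn p.1.2 q.2 p.1.1 := by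
    rintro ⟨⟨t, h⟩, hfin', hpi'⟩ n
    obtain ⟨s', f', h1, h2, h3, h4, h5, h6⟩ := Γ.extend hr hfin' hpi' (hev n) (hev n)
    exact ⟨(s', f'), ⟨h1, h6⟩, h2, h3, h4, h5⟩
  choose next hnext using ex
  set chain : ℕ → {p : Set V × (V → V) // p.1.Finite ∧ Γ.IsPartialIso Γ p.1 p.2} :=
    fun n => Nat.rec ⟨(s, f), hfin, hpi⟩
      (fun n p => ⟨next p n, (hnext p n).1⟩) n with hchain
  have inv : ∀ n, (chain n).1.1.Finite ∧ Γ.IsPartialIso Γ (chain n).1.1 (chain n).1.2 :=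
    fun n => (chain n).2
  have step : ∀ n, (chain n).1.1 ⊆ (chain (n + 1)).1.1 ∧ e n ∈ (chain (n + 1)).1.1 ∧
      e n ∈ (chain (n + 1)).1.2 '' (chain (n + 1)).1.1 ∧
      Set.EqOn (chain n).1.2 (chain (n + 1)).1.2 (chain n).1.1 := by
    intro n
    exact (hnext (chain n) n).2
  have mono : ∀ m n, m ≤ n → (chain m).1.1 ⊆ (chain n).1.1 := by
    intro m n hmn
    induction n with
    | zero => rw [Nat.le_zero.mp hmn]
    | succ n ih =>
      rcases Nat.le_succ_iff.mp hmn with h | h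
      · exact (ih h).trans (step n).1
      · rw [h]
  have eqOn : ∀ m n, m ≤ n → Set.EqOn (chain m).1.2 (chain n).1.2 (chain m).1.1 := by
    intro m n hmn
    induction n with
    | zero => rw [Nat.le_zero.mp hmn]; exact fun _ _ => rfl
    | succ n ih =>
      rcases Nat.le_succ_iff.mp hmn with h | h
      · exact fun x hx => ((ih h) hx).trans ((step n).2.2.2 (mono m n h hx))
      · rw [h]; exact fun _ _ => rfl
  set g : V → V := fun v => if h : ∃ n, v ∈ (chain n).1.1 then (chain (Nat.find h)).1.2 v else v
    with hg
  have gdef : ∀ n v, v ∈ (chain n).1.1 → g v = (chain n).1.2 v := by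
    intro n v hv
    have h : ∃ n, v ∈ (chain n).1.1 := ⟨n, hv⟩
    rw [hg]
    simp only [dif_pos h]
    exact eqOn (Nat.find h) n (Nat.find_le hv) (Nat.find_spec h)
  have cover : ∀ v ∈ Γ.verts, ∃ n, v ∈ (chain n).1.1 := by
    intro v hv
    rw [he] at hv
    obtain ⟨m, rfl⟩ := hv
    exact ⟨m + 1, (step m).2.1⟩
  have surj : ∀ w ∈ Γ.verts, ∃ v, v ∈ Γ.verts ∧ g v = w := by
    intro w hw
    rw [he] at hw
    obtain ⟨m, rfl⟩ := hw
    obtain ⟨v, hv, hfv⟩ := (step m).2.2.1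
    exact ⟨v, (inv (m + 1)).2.1 hv, (gdef (m + 1) v hv).trans hfv⟩
  have both : ∀ x ∈ Γ.verts, ∀ y ∈ Γ.verts, ∃ n, x ∈ (chain n).1.1 ∧ y ∈ (chain n).1.1 := by
    intro x hx y hy
    obtain ⟨m, hm⟩ := cover x hx
    obtain ⟨n, hn⟩ := cover y hy
    exact ⟨max m n, mono m _ (le_max_left m n) hm, mono n _ (le_max_right m n) hn⟩
  have gL : ∀ v ∈ Γ.L, g v ∈ Γ.L := by
    intro v hv
    obtain ⟨n, hn⟩ := cover v (Or.inl hv)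
    rw [gdef n v hn]
    exact (inv n).2.2.2.1 v hn hv
  have gR : ∀ v ∈ Γ.R, g v ∈ Γ.R := by
    intro v hv
    obtain ⟨n, hn⟩ := cover v (Or.inr hv)
    rw [gdef n v hn]
    exact (inv n).2.2.2.2.1 v hn hv
  have gMaps : Set.MapsTo g Γ.verts Γ.verts := by
    rintro v (hv | hv)
    · exact Or.inl (gL v hv)
    · exact Or.inr (gR v hv)
  refine ⟨g, ⟨⟨gMaps, ?_, ?_⟩, gL, gR, ?_⟩, ?_⟩
  · intro x hx y hy hxy
    obtain ⟨n, hxn, hyn⟩ := both x hx y hy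
    rw [gdef n x hxn, gdef n y hyn] at hxy
    exact (inv n).2.2.1 hxn hyn hxy
  · intro w hw
    obtain ⟨v, hv, hgv⟩ := surj w hw
    exact ⟨v, hv, hgv⟩
  · intro x hx y hy
    obtain ⟨n, hxn, hyn⟩ := both x hx y hy
    rw [gdef n x hxn, gdef n y hyn]
    exact (inv n).2.2.2.2.2 x hxn y hyn
  · intro x hx
    exact (gdef 0 x hx).symm
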